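/- For any integer m ≥ 1, subset S ⊆ [m] = {1,2,…,m} with s = |S|, let {}_Sℍ_m(x;t) = 1 + Σ_{n≥1} ({}_Sℍ_{n,m}(x)) t^n where {}_Sℍ_{n,m}(x) = Σ_{T ∈ 𝒯_{n,m+1}} ∏_{v ∈ 𝓘(T)} (x + 1/ℍ_v^S), and let {}_∅ℍ_{m−s}(x;t) be the analogous generating function for complete (m−s+1)-ary trees with S = ∅. Then, as formal power series in t over ℚ[x], {}_Sℍ_m(x;t) = {}_∅ℍ_{m−s}(x; t·({}_Sℍ_m(x;t))^s); equivalently, {}_Sℍ_m(x;t) = 1 + Σ_{n≥1} ({}_∅ℍ_{n,m−s}(x)) · t^n · ({}_Sℍ_m(x;t))^{ns}. -/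

import Mathlib

open Polynomial Finset

/-- A complete `m`-ary tree: a `leaf` is an external vertex and a `node`
has exactly `m` linearly ordered subtrees. -/
inductive MTree (m : ℕ) : Type
  | leaf : MTree m
  | node : (Fin m → MTree m) → MTree m

namespace MTree

/-- The number of internal vertices of a complete `m`-ary tree. -/
def internals {m : ℕ} : MTree m → ℕ
  | leaf => 0
  | node c => 1 + ∑ i, (c i).internals

/-- The first kind of hook length of the root of `node c`: one plus the number of
internal vertices of all subtrees except the rightmost one. -/
def hook1 {m : ℕ} (c : Fin m → MTree m) : ℕ :=
  1 + ∑ i ∈ Finset.univ.filter (fun i : Fin m => (i : ℕ) + 1 < m), (c i).internals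

/-- The product of `f (𝓗_v)` over all internal vertices `v` of a complete `m`-ary
tree, where `𝓗_v` is the first kind of hook length. -/
def hookProd1 {m : ℕ} {R : Type*} [CommSemiring R] (f : ℕ → R) : MTree m → R
  | leaf => 1
  | node c => f (hook1 c) * ∏ i, hookProd1 f (c i)

/-- The number of internal vertices of the `(m+1-|S|)`-ary tree `T^S` obtained from a
complete `(m+1)`-ary tree `T` by recursively deleting, for every `r ∈ S ⊆ [m]`,
the `r`-th subtree of every remaining internal vertex (the label `r ∈ {1,…,m}`
corresponds to the child with index `r - 1`, i.e. to `Fin.castSucc` of `Fin m`). -/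
def internalsS {m : ℕ} (S : Finset (Fin m)) : MTree (m + 1) → ℕ
  | leaf => 0
  | node c => 1 + ∑ i ∈ (S.image Fin.castSucc)ᶜ, internalsS S (c i)

/-- The product of `f (ℍ_v^S)` over all internal vertices `v` of a complete
`(m+1)`-ary tree, where `ℍ_v^S` is the second kind of hook length. -/
def hookProdS {m : ℕ} {R : Type*} [CommSemiring R] (S : Finset (Fin m)) (f : ℕ → R) :
    MTree (m + 1) → R
  | leaf => 1
  | node c => f (internalsS S (node c)) * ∏ i, hookProdS S f (c i)

end MTree

/-- `{}_Sℍ_{n,m}(x) = Σ_{T ∈ 𝒯_{n,m+1}} ∏_{v ∈ 𝓘(T)} (x + 1/ℍ_v^S)` (for `n = 0`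
the only tree is the single external vertex, so `{}_Sℍ_{0,m}(x) = 1`). -/
noncomputable def hookPolyS (m : ℕ) (S : Finset (Fin m)) (n : ℕ) : Polynomial ℚ :=
  ∑ᶠ T ∈ {T : MTree (m + 1) | T.internals = n},
    MTree.hookProdS S (fun h => (X : ℚ[X]) + C ((h : ℚ)⁻¹)) T

/-- The generating function `{}_Sℍ_m(x;t) = 1 + Σ_{n≥1} ({}_Sℍ_{n,m}(x)) tⁿ`. -/
noncomputable def hookGFS (m : ℕ) (S : Finset (Fin m)) : PowerSeries (Polynomial ℚ) :=
  PowerSeries.mk (hookPolyS m S)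

/-!
Group the trees `T` according to the size `N = |T^S|` of their pruned tree, and let `B_N(t)` be
the generating function of the fibre. A tree with `|T^S| = N + 1` is a root with hook length
`N + 1` whose children in the positions of `S` are arbitrary trees, while the pruned sizes of the
other `m - s + 1` children add up to `N`. Hence
`B_{N+1} = f(N+1) · t · H^s · [u^N] (Σ_j B_j u^j)^{m-s+1}` with `H = {}_Sℍ_m` and `f(h) = x + 1/h`.
For `S = ∅` the fibres are `g_N t^N` with `g = {}_∅ℍ_{m-s}`, so the same recursion says
`g_{N+1} = f(N+1) · [u^N] g(u)^{m-s+1}`. Comparing the two recursions, induction on `N` gives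
`B_N = g_N (t H^s)^N`, and summing over `N` is the functional equation. Nothing depends on the
particular weight `f`.
-/

theorem Finset.sum_finsuppAntidiag_prod_ite_eq {ι R : Type*} [DecidableEq ι] [CommSemiring R]
    (s : Finset ι) (N : ℕ) (x : ι → ℕ) (g : ι → R) :
    ∑ ν ∈ finsuppAntidiag s N, ∏ i ∈ s, (if x i = ν i then g i else 0) =
      if ∑ i ∈ s, x i = N then ∏ i ∈ s, g i else 0 := by
  have h := congrArg (PowerSeries.coeff N) (PowerSeries.prod_monomial x g s)
  simp only [PowerSeries.coeff_prod, PowerSeries.coeff_monomial] at h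
  simpa only [eq_comm] using h

namespace PowerSeries

variable {R : Type*} [CommSemiring R]

theorem coeff_pow_eq_of_coeff_eq {p q : R⟦X⟧} {N : ℕ} (h : ∀ j ≤ N, coeff j p = coeff j q)
    (k : ℕ) : coeff N (p ^ k) = coeff N (q ^ k) := by
  have htrunc : trunc (N + 1) p = trunc (N + 1) q := by
    ext j
    simp only [coeff_trunc]
    split_ifs with hj
    exacts [h j (Nat.lt_succ_iff.mp hj), rfl]
  calc coeff N (p ^ k) = (trunc (N + 1) (p ^ k)).coeff N := by
        rw [coeff_trunc, if_pos N.lt_succ_self]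
    _ = (trunc (N + 1) (q ^ k)).coeff N := by rw [← trunc_trunc_pow, htrunc, trunc_trunc_pow]
    _ = coeff N (q ^ k) := by rw [coeff_trunc, if_pos N.lt_succ_self]

theorem coeff_pow_mk_map_mul_pow {A : Type*} [CommSemiring A] (φ : R →+* A) (p : R⟦X⟧) (Q : A)
    (k N : ℕ) :
    coeff N ((mk fun j => φ (coeff j p) * Q ^ j) ^ k) = φ (coeff N (p ^ k)) * Q ^ N := by
  have hrescale : mk (fun j => φ (coeff j p) * Q ^ j) = rescale Q (map φ p) := by
    ext j
    rw [coeff_mk, coeff_rescale, coeff_map, mul_comm]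
  rw [hrescale, ← map_pow, ← map_pow, coeff_rescale, coeff_map, mul_comm]

end PowerSeries

namespace MTree

open PowerSeries

section Trees

variable {K : ℕ}

theorem internals_eq_zero_iff {T : MTree K} : T.internals = 0 ↔ T = leaf := by
  cases T <;> simp [internals]

theorem finite_setOf_internals_le (K n : ℕ) : {T : MTree K | T.internals ≤ n}.Finite := by
  induction n with
  | zero =>
    exact (Set.finite_singleton leaf).subset fun T hT => internals_eq_zero_iff.mp (Nat.le_zero.mp hT)
  | succ n ih =>
    refine ((Set.Finite.pi fun _ : Fin K => ih).image node |>.insert leaf).subset ?_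
    rintro (_ | c) hT
    · exact Set.mem_insert _ _
    · refine Set.mem_insert_of_mem _ ⟨c, fun i _ => ?_, rfl⟩
      have hle : (c i).internals ≤ ∑ j, (c j).internals :=
        Finset.single_le_sum (f := fun j => (c j).internals) (fun _ _ => Nat.zero_le _)
          (Finset.mem_univ i)
      simp only [Set.mem_ofPred_eq, internals] at hT ⊢
      omega

noncomputable def ofSize (K n : ℕ) : Finset (MTree K) :=
  ((finite_setOf_internals_le K n).subset fun _ (h : _ = n) => h.le).toFinset

@[simp] theorem mem_ofSize {n : ℕ} {T : MTree K} : T ∈ ofSize K n ↔ T.internals = n :=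
  Set.Finite.mem_toFinset _

theorem coe_ofSize (n : ℕ) : (ofSize K n : Set (MTree K)) = {T | T.internals = n} :=
  Set.Finite.coe_toFinset _

theorem ofSize_zero : ofSize K 0 = {leaf} := by
  ext T
  simp [internals_eq_zero_iff]

theorem sum_ofSize_succ {M : Type*} [AddCommMonoid M] (F : MTree K → M) (n : ℕ) :
    ∑ T ∈ ofSize K (n + 1), F T =
      ∑ μ ∈ finsuppAntidiag Finset.univ n, ∑ c ∈ Fintype.piFinset fun i => ofSize K (μ i),
        F (node c) := by
  rw [Finset.sum_sigma']
  symm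
  refine Finset.sum_bij (fun x _ => node x.2) ?_ ?_ ?_ fun _ _ => rfl
  · rintro ⟨μ, c⟩ hx
    simp only [Finset.mem_sigma, mem_finsuppAntidiag, Fintype.mem_piFinset, mem_ofSize] at hx
    simp only [mem_ofSize, internals, Finset.sum_congr rfl fun i _ => hx.2 i, hx.1.1]
    omega
  · rintro ⟨μ, c⟩ hx ⟨μ', c'⟩ hx' h
    simp only [Finset.mem_sigma, Fintype.mem_piFinset, mem_ofSize] at hx hx'
    obtain rfl : c = c' := node.inj h
    obtain rfl : μ = μ' := Finsupp.ext fun i => (hx.2 i).symm.trans (hx'.2 i)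
    rfl
  · rintro (_ | c) hT
    · simp [internals] at hT
    · refine ⟨⟨Finsupp.equivFunOnFinite.symm fun i => (c i).internals, c⟩, ?_, rfl⟩
      simp only [mem_ofSize, internals] at hT
      simp only [Finset.mem_sigma, mem_finsuppAntidiag, Fintype.mem_piFinset, mem_ofSize,
        Finsupp.equivFunOnFinite_symm_apply_apply, Finsupp.equivFunOnFinite_symm_apply_support,
        Finset.subset_univ, and_true, implies_true]
      omega

variable {R : Type*} [CommSemiring R]

noncomputable def genFun : (MTree K → R) →ₗ[R] R⟦X⟧ where
  toFun F := mk fun n => ∑ T ∈ ofSize K n, F T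
  map_add' F G := by ext n; simp [Finset.sum_add_distrib]
  map_smul' a F := by ext n; simp [Finset.mul_sum]

theorem coeff_genFun (F : MTree K → R) (n : ℕ) :
    PowerSeries.coeff n (genFun F) = ∑ T ∈ ofSize K n, F T :=
  coeff_mk n fun n => ∑ T ∈ ofSize K n, F T

def nodeProd (F : Fin K → MTree K → R) : MTree K → R
  | leaf => 0
  | node c => ∏ i, F i (c i)

theorem genFun_nodeProd (F : Fin K → MTree K → R) :
    genFun (nodeProd F) = PowerSeries.X * ∏ i, genFun (F i) := by
  ext (_ | n)
  · simp [coeff_genFun, ofSize_zero, nodeProd]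
  · simp only [coeff_succ_X_mul, coeff_genFun, sum_ofSize_succ, nodeProd, coeff_prod,
      Finset.prod_univ_sum]

end Trees

section Pruning

variable {m : ℕ} (S : Finset (Fin m))

theorem internalsS_le_internals : ∀ T : MTree (m + 1), internalsS S T ≤ T.internals
  | leaf => le_rfl
  | node c => by
    simp only [internalsS, internals]
    gcongr with i
    calc ∑ i ∈ (S.image Fin.castSucc)ᶜ, internalsS S (c i)
        ≤ ∑ i ∈ (S.image Fin.castSucc)ᶜ, (c i).internals :=
          Finset.sum_le_sum fun i _ => internalsS_le_internals (c i)
      _ ≤ ∑ i, (c i).internals := Finset.sum_le_sum_of_subset (Finset.subset_univ _)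

theorem internalsS_eq_zero_iff {T : MTree (m + 1)} : internalsS S T = 0 ↔ T = leaf := by
  cases T <;> simp [internalsS]

theorem internalsS_empty : ∀ T : MTree (m + 1), internalsS (∅ : Finset (Fin m)) T = T.internals
  | leaf => rfl
  | node c => by
    simp only [internalsS, internals, Finset.image_empty, Finset.compl_empty]
    exact congrArg (1 + ·) (Finset.sum_congr rfl fun i _ => internalsS_empty (c i))

theorem card_compl_image_castSucc : #(S.image Fin.castSucc)ᶜ = m - #S + 1 := by
  have hS : #S ≤ m := by simpa using Finset.card_le_univ S
  rw [Finset.card_compl, Finset.card_image_of_injective _ (Fin.castSucc_injective m),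
    Fintype.card_fin]
  omega

variable {R : Type*} [CommSemiring R] (f : ℕ → R)

noncomputable def hookSeries : R⟦X⟧ := genFun (hookProdS S f)

noncomputable def hookSeriesFiber (N : ℕ) : R⟦X⟧ :=
  genFun fun T => if internalsS S T = N then hookProdS S f T else 0

theorem coeff_hookSeries_eq_sum_fiber (k : ℕ) :
    PowerSeries.coeff k (hookSeries S f) =
      ∑ N ∈ Finset.range (k + 1), PowerSeries.coeff k (hookSeriesFiber S f N) := by
  simp only [hookSeries, hookSeriesFiber, coeff_genFun]
  rw [Finset.sum_comm]
  refine Finset.sum_congr rfl fun T hT => ?_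
  have hle : internalsS S T < k + 1 :=
    Nat.lt_succ_of_le ((internalsS_le_internals S T).trans_eq (mem_ofSize.mp hT))
  rw [Finset.sum_ite_eq, if_pos (Finset.mem_range.mpr hle)]

theorem coeff_hookSeries_zero :
    PowerSeries.coeff 0 (hookSeries S f) = 1 := by
  simp [hookSeries, coeff_genFun, ofSize_zero, hookProdS]

theorem hookSeriesFiber_zero : hookSeriesFiber S f 0 = 1 := by
  ext (_ | n)
  · simp [hookSeriesFiber, coeff_genFun, ofSize_zero, internalsS, hookProdS]
  · rw [PowerSeries.coeff_one, if_neg n.succ_ne_zero, hookSeriesFiber, coeff_genFun]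
    refine Finset.sum_eq_zero fun T hT => if_neg ?_
    rintro hT0
    rw [internalsS_eq_zero_iff] at hT0
    simp [hT0, internals] at hT

/-- `ν` prescribes the pruned sizes of the children that survive in `T^S`; the children in the
positions of `S` are unconstrained. -/
def childWeight (ν : Fin (m + 1) →₀ ℕ) (i : Fin (m + 1)) (T : MTree (m + 1)) : R :=
  if i ∈ S.image Fin.castSucc ∨ internalsS S T = ν i then hookProdS S f T else 0

theorem genFun_childWeight (ν : Fin (m + 1) →₀ ℕ) (i : Fin (m + 1)) :
    genFun (childWeight S f ν i) =
      if i ∈ S.image Fin.castSucc then hookSeries S f else hookSeriesFiber S f (ν i) := by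
  by_cases hi : i ∈ S.image Fin.castSucc
  · simp only [hi, if_true, hookSeries]
    congr 1 with T
    exact if_pos (Or.inl hi)
  · simp only [hi, if_false, hookSeriesFiber]
    congr 1 with T
    simp only [childWeight, hi, false_or]

theorem ite_internalsS_node_eq_sum (c : Fin (m + 1) → MTree (m + 1)) (N : ℕ) :
    (if internalsS S (node c) = N + 1 then hookProdS S f (node c) else 0) =
      f (N + 1) * ∑ ν ∈ finsuppAntidiag (S.image Fin.castSucc)ᶜ N,
        ∏ i, childWeight S f ν i (c i) := by
  have hsplit : ∀ ν : Fin (m + 1) →₀ ℕ, ∏ i, childWeight S f ν i (c i) =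
      (∏ i ∈ S.image Fin.castSucc, hookProdS S f (c i)) *
        ∏ i ∈ (S.image Fin.castSucc)ᶜ,
          if internalsS S (c i) = ν i then hookProdS S f (c i) else 0 := by
    intro ν
    rw [← Finset.prod_mul_prod_compl (S.image Fin.castSucc)]
    congr 1 <;> refine Finset.prod_congr rfl fun i hi => ?_
    · exact if_pos (Or.inl hi)
    · simp only [childWeight, Finset.mem_compl.mp hi, false_or]
  simp_rw [hsplit, ← Finset.mul_sum, Finset.sum_finsuppAntidiag_prod_ite_eq]
  have hroot : internalsS S (node c) = ∑ i ∈ (S.image Fin.castSucc)ᶜ, internalsS S (c i) + 1 :=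
    add_comm _ _
  rw [hookProdS, hroot]
  simp only [Nat.add_right_cancel_iff]
  by_cases h : ∑ i ∈ (S.image Fin.castSucc)ᶜ, internalsS S (c i) = N
  · rw [if_pos h, if_pos h, h, ← Finset.prod_mul_prod_compl (S.image Fin.castSucc)]
  · rw [if_neg h, if_neg h, mul_zero, mul_zero]

theorem hookSeriesFiber_succ (N : ℕ) :
    hookSeriesFiber S f (N + 1) =
      PowerSeries.C (f (N + 1)) * PowerSeries.X * hookSeries S f ^ #S *
        PowerSeries.coeff N (PowerSeries.mk (hookSeriesFiber S f) ^ (m - #S + 1)) := by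
  have hfun : (fun T => if internalsS S T = N + 1 then hookProdS S f T else 0) =
      f (N + 1) • ∑ ν ∈ finsuppAntidiag (S.image Fin.castSucc)ᶜ N,
        nodeProd (childWeight S f ν) := by
    funext T
    cases T with
    | leaf => simp [internalsS, nodeProd]
    | node c =>
      simp only [Pi.smul_apply, Finset.sum_apply, nodeProd, smul_eq_mul]
      exact ite_internalsS_node_eq_sum S f c N
  have hprod : ∀ ν : Fin (m + 1) →₀ ℕ, ∏ i, genFun (childWeight S f ν i) =
      hookSeries S f ^ #S * ∏ i ∈ (S.image Fin.castSucc)ᶜ, hookSeriesFiber S f (ν i) := by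
    intro ν
    simp_rw [genFun_childWeight]
    rw [← Finset.prod_mul_prod_compl (S.image Fin.castSucc)]
    congr 1
    · rw [Finset.prod_congr rfl fun i hi => if_pos hi, Finset.prod_const,
        Finset.card_image_of_injective _ (Fin.castSucc_injective m)]
    · exact Finset.prod_congr rfl fun i hi => if_neg (Finset.mem_compl.mp hi)
  have hcoeff : PowerSeries.coeff N (PowerSeries.mk (hookSeriesFiber S f) ^ (m - #S + 1)) =
      ∑ ν ∈ finsuppAntidiag (S.image Fin.castSucc)ᶜ N,
        ∏ i ∈ (S.image Fin.castSucc)ᶜ, hookSeriesFiber S f (ν i) := by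
    rw [← card_compl_image_castSucc, ← Finset.prod_const, coeff_prod]
    simp only [coeff_mk]
  rw [hookSeriesFiber, hfun, map_smul, map_sum, hcoeff, PowerSeries.smul_eq_C_mul,
    Finset.mul_sum, Finset.mul_sum]
  refine Finset.sum_congr rfl fun ν _ => ?_
  rw [genFun_nodeProd, hprod]
  ring

end Pruning

section Empty

variable {m : ℕ} {R : Type*} [CommSemiring R] (f : ℕ → R)

theorem hookSeriesFiber_empty (N : ℕ) :
    hookSeriesFiber (∅ : Finset (Fin m)) f N =
      PowerSeries.C (PowerSeries.coeff N (hookSeries (∅ : Finset (Fin m)) f)) *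
        PowerSeries.X ^ N := by
  ext n
  rw [PowerSeries.coeff_C_mul_X_pow, hookSeriesFiber, hookSeries, coeff_genFun, coeff_genFun]
  simp_rw [internalsS_empty]
  split_ifs with h
  · subst h
    exact Finset.sum_congr rfl fun T hT => if_pos (mem_ofSize.mp hT)
  · exact Finset.sum_eq_zero fun T hT => if_neg (by rwa [mem_ofSize.mp hT])

theorem coeff_hookSeries_empty_succ (N : ℕ) :
    PowerSeries.coeff (N + 1) (hookSeries (∅ : Finset (Fin m)) f) =
      f (N + 1) * PowerSeries.coeff N (hookSeries (∅ : Finset (Fin m)) f ^ (m + 1)) := by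
  have hsucc := hookSeriesFiber_succ (∅ : Finset (Fin m)) f N
  rw [congrArg PowerSeries.mk (funext (hookSeriesFiber_empty f)),
    PowerSeries.coeff_pow_mk_map_mul_pow, hookSeriesFiber_empty, Finset.card_empty, pow_zero,
    mul_one, Nat.sub_zero] at hsucc
  set H := hookSeries (∅ : Finset (Fin m)) f
  have hcoeff : PowerSeries.C (PowerSeries.coeff (N + 1) H) * PowerSeries.X ^ (N + 1) =
      PowerSeries.C (f (N + 1) * PowerSeries.coeff N (H ^ (m + 1))) *
        PowerSeries.X ^ (N + 1) := by
    rw [hsucc, map_mul, pow_succ]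
    ring
  simpa only [PowerSeries.coeff_C_mul_X_pow, if_true] using
    congrArg (PowerSeries.coeff (N + 1)) hcoeff

theorem hookSeriesFiber_eq (S : Finset (Fin m)) (N : ℕ) :
    hookSeriesFiber S f N =
      PowerSeries.C (PowerSeries.coeff N (hookSeries (∅ : Finset (Fin (m - #S))) f)) *
        PowerSeries.X ^ N * hookSeries S f ^ (N * #S) := by
  induction N using Nat.strong_induction_on with | _ N ih => ?_
  cases N with
  | zero => simp [hookSeriesFiber_zero, coeff_hookSeries_zero]
  | succ N =>
    have hlow : ∀ j ≤ N, PowerSeries.coeff j (PowerSeries.mk (hookSeriesFiber S f)) =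
        PowerSeries.coeff j (PowerSeries.mk fun j =>
          PowerSeries.C (PowerSeries.coeff j (hookSeries (∅ : Finset (Fin (m - #S))) f)) *
            (PowerSeries.X * hookSeries S f ^ #S) ^ j) := by
      intro j hj
      rw [coeff_mk, coeff_mk, ih j (Nat.lt_succ_of_le hj), mul_pow, ← pow_mul, mul_assoc,
        mul_comm j]
    rw [hookSeriesFiber_succ, PowerSeries.coeff_pow_eq_of_coeff_eq hlow,
      PowerSeries.coeff_pow_mk_map_mul_pow, coeff_hookSeries_empty_succ, map_mul]
    ring

end Empty

end MTree

theorem hookGFS_eq_hookSeries (m : ℕ) (S : Finset (Fin m)) :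
    hookGFS m S = MTree.hookSeries S (fun h => (X : ℚ[X]) + C ((h : ℚ)⁻¹)) := by
  refine PowerSeries.ext fun n => ?_
  rw [hookGFS, PowerSeries.coeff_mk, MTree.hookSeries, MTree.coeff_genFun, hookPolyS,
    ← MTree.coe_ofSize, finsum_mem_coe_finset]

theorem hookGFS_functional_equation_general (m : ℕ) (S : Finset (Fin m)) :
    ∀ k : ℕ,
      PowerSeries.coeff (R := Polynomial ℚ) k (hookGFS m S) =
        ∑ n ∈ Finset.range (k + 1),
          hookPolyS (m - S.card) (∅ : Finset (Fin (m - S.card))) n *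
            PowerSeries.coeff (R := Polynomial ℚ) (k - n)
              (hookGFS m S ^ (n * S.card)) := by
  intro k
  have hpoly : ∀ n, hookPolyS (m - #S) ∅ n = PowerSeries.coeff n (hookGFS (m - #S) ∅) :=
    fun n => (PowerSeries.coeff_mk _ _).symm
  simp only [hpoly, hookGFS_eq_hookSeries]
  rw [MTree.coeff_hookSeries_eq_sum_fiber S]
  refine Finset.sum_congr rfl fun N hN => ?_
  rw [MTree.hookSeriesFiber_eq, mul_assoc, PowerSeries.coeff_C_mul, PowerSeries.coeff_X_pow_mul',
    if_pos (Nat.lt_succ_iff.mp (Finset.mem_range.mp hN))]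

/-- **Functional equation for `{}_Sℍ_m(x;t)`.**  For `m ≥ 1` and `S ⊆ [m]` with
`s = |S|`, one has `{}_Sℍ_m(x;t) = {}_∅ℍ_{m-s}(x; t ({}_Sℍ_m(x;t))^s)`,
equivalently `{}_Sℍ_m(x;t) = 1 + Σ_{n≥1} ({}_∅ℍ_{n,m-s}(x)) tⁿ ({}_Sℍ_m(x;t))^{ns}`.
Since `tⁿ ({}_Sℍ_m)^{ns}` has order at least `n`, this is expressed
coefficientwise: the coefficient of `tᵏ` in `{}_Sℍ_m(x;t)` equals
`Σ_{n≤k} ({}_∅ℍ_{n,m-s}(x)) ⬝ [t^{k-n}] (({}_Sℍ_m(x;t))^{ns})`. -/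
theorem hookGFS_functional_equation (m : ℕ) (hm : 1 ≤ m) (S : Finset (Fin m)) :
    ∀ k : ℕ,
      PowerSeries.coeff (R := Polynomial ℚ) k (hookGFS m S) =
        ∑ n ∈ Finset.range (k + 1),
          hookPolyS (m - S.card) (∅ : Finset (Fin (m - S.card))) n *
            PowerSeries.coeff (R := Polynomial ℚ) (k - n)
              (hookGFS m S ^ (n * S.card)) :=
  hookGFS_functional_equation_general m S
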